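/- Let X_1, …, X_n be centered, independent and identically distributed real random variables in L^p, p ≥ 2. Then there is a constant c_p > 0, depending only on p, such that ‖∑_{i=1}^n X_i‖_p ≤ c_p (√n ‖X_1‖_2 + n^{1/p} ‖X_1‖_p). -/

import Mathlib

/-!
Write `φ(x) = x |x|^(p-2)` (`signedRpow (p - 2)`), `S = ∑ Xᵢ` and `Tᵢ = S - Xᵢ`.
Then `E|S|^p = ∑ E[Xᵢ φ(S)]`, and since `Xᵢ` is centered and independent of `Tᵢ`,
`E[Xᵢ φ(Tᵢ)] = 0`, so that `E[Xᵢ φ(S)] = E[Xᵢ (φ(Tᵢ + Xᵢ) - φ(Tᵢ))]`. The mean value bound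
`|φ(s) - φ(t)| ≤ (p-1) max(|s|, |t|)^(p-2) |s - t|` and independence once more bound this by a
multiple of `E Xᵢ² · E|Tᵢ|^(p-2) + E|Xᵢ|^p`, where `E|Tᵢ|^(p-2) ≤ (‖S‖_p + ‖Xᵢ‖_p)^(p-2)`.
Summing, `‖S‖_p^p ≤ C (∑ ‖Xᵢ‖_p^p + ∑ ‖Xᵢ‖₂² · ‖S‖_p^(p-2))`, and either the first or the second
term dominates: `‖S‖_p ≤ (2C ∑ ‖Xᵢ‖_p^p)^(1/p) + (2C ∑ ‖Xᵢ‖₂²)^(1/2)`. This is Rosenthal's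
inequality for independent centered summands; the i.i.d. case is a specialization.
-/

open MeasureTheory ProbabilityTheory Real

noncomputable section

namespace Real

lemma rpow_mul_rpow_le_rpow_add_rpow {a b r s : ℝ} (ha : 0 ≤ a) (hb : 0 ≤ b) (hr : 0 ≤ r)
    (hs : 0 ≤ s) : a ^ r * b ^ s ≤ a ^ (r + s) + b ^ (r + s) := by
  rcases le_total a b with hab | hba
  · calc a ^ r * b ^ s ≤ b ^ r * b ^ s := by gcongr
      _ = b ^ (r + s) := (rpow_add_of_nonneg hb hr hs).symm
      _ ≤ a ^ (r + s) + b ^ (r + s) := le_add_of_nonneg_left (by positivity)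
  · calc a ^ r * b ^ s ≤ a ^ r * a ^ s := by gcongr
      _ = a ^ (r + s) := (rpow_add_of_nonneg ha hr hs).symm
      _ ≤ a ^ (r + s) + b ^ (r + s) := le_add_of_nonneg_right (by positivity)

lemma add_rpow_le_two_rpow_mul_add_rpow {a b r : ℝ} (ha : 0 ≤ a) (hb : 0 ≤ b) (hr : 0 ≤ r) :
    (a + b) ^ r ≤ 2 ^ r * (a ^ r + b ^ r) := by
  have hmax : max a b ^ r ≤ a ^ r + b ^ r := by
    rw [rpow_max ha hb hr]
    exact max_le (le_add_of_nonneg_right (by positivity)) (le_add_of_nonneg_left (by positivity))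
  calc (a + b) ^ r ≤ (2 * max a b) ^ r := by
        gcongr; linarith [le_max_left a b, le_max_right a b]
    _ = 2 ^ r * max a b ^ r := mul_rpow zero_le_two (ha.trans (le_max_left a b))
    _ ≤ 2 ^ r * (a ^ r + b ^ r) := by gcongr

lemma rpow_add_one_sub_rpow_add_one_le {q s t : ℝ} (hq : 0 ≤ q) (ht : 0 ≤ t) (hts : t ≤ s) :
    s ^ (q + 1) - t ^ (q + 1) ≤ (q + 1) * s ^ q * (s - t) := by
  obtain rfl | hs := (ht.trans hts).eq_or_lt
  · obtain rfl : t = 0 := le_antisymm hts ht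
    simp
  have hbernoulli : 1 + (q + 1) * (t / s - 1) ≤ (t / s) ^ (q + 1) := by
    simpa using one_add_mul_self_le_rpow_one_add (s := t / s - 1)
      (by linarith [div_nonneg ht hs.le]) (p := q + 1) (by linarith)
  have hsq : s ^ (q + 1) = s ^ q * s := rpow_add_one hs.ne' q
  calc s ^ (q + 1) - t ^ (q + 1)
      = s ^ (q + 1) - (t / s) ^ (q + 1) * s ^ (q + 1) := by
        rw [← mul_rpow (div_nonneg ht hs.le) hs.le, div_mul_cancel₀ t hs.ne']
    _ ≤ s ^ (q + 1) - (1 + (q + 1) * (t / s - 1)) * s ^ (q + 1) := by gcongr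
    _ = (q + 1) * s ^ q * (s - t) := by
        rw [hsq]; field_simp; ring

lemma le_rpow_add_sqrt_of_rpow_le_add_mul_rpow {p s A B : ℝ} (hp : 0 < p) (hs : 0 ≤ s)
    (hA : 0 ≤ A) (h : s ^ p ≤ A + B * s ^ (p - 2)) : s ≤ (2 * A) ^ (1 / p) + √(2 * B) := by
  rcases le_total (B * s ^ (p - 2)) A with hBA | hAB
  · have : s ≤ (2 * A) ^ (1 / p) := calc
      s = (s ^ p) ^ (1 / p) := by rw [← rpow_mul hs, mul_one_div_cancel hp.ne', rpow_one]
      _ ≤ (2 * A) ^ (1 / p) := by gcongr; linarith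
    linarith [sqrt_nonneg (2 * B)]
  · obtain rfl | hs := hs.eq_or_lt
    · positivity
    have hsp : s ^ p = s ^ 2 * s ^ (p - 2) := by
      rw [← rpow_natCast, ← rpow_add hs]; norm_num
    have : s ^ 2 ≤ 2 * B := by
      have := rpow_pos_of_pos hs (p - 2)
      nlinarith
    have : s ≤ √(2 * B) := le_sqrt_of_sq_le this
    linarith [rpow_nonneg (by linarith : 0 ≤ 2 * A) (1 / p)]

end Real

def signedRpow (q x : ℝ) : ℝ := x * |x| ^ q

section signedRpow

variable {q : ℝ}

lemma signedRpow_neg (x : ℝ) : signedRpow q (-x) = -signedRpow q x := by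
  simp [signedRpow]

lemma signedRpow_of_nonneg (hq : 0 ≤ q) {x : ℝ} (hx : 0 ≤ x) : signedRpow q x = x ^ (q + 1) := by
  rw [signedRpow, abs_of_nonneg hx, rpow_add_one' hx (by linarith), mul_comm]

lemma abs_signedRpow (hq : 0 ≤ q) (x : ℝ) : |signedRpow q x| = |x| ^ (q + 1) := by
  rw [signedRpow, abs_mul, abs_of_nonneg (rpow_nonneg (abs_nonneg x) q),
    rpow_add_one' (abs_nonneg x) (by linarith), mul_comm]

lemma mul_signedRpow_self (hq : 0 ≤ q) (x : ℝ) : x * signedRpow q x = |x| ^ (q + 2) := by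
  rw [signedRpow, ← mul_assoc, ← sq, ← sq_abs, add_comm q,
    rpow_add_of_nonneg (abs_nonneg x) zero_le_two hq]
  norm_cast

lemma continuous_signedRpow (hq : 0 ≤ q) : Continuous (signedRpow q) :=
  continuous_id.mul (continuous_abs.rpow_const fun _ => Or.inr hq)

lemma abs_signedRpow_sub_le (hq : 0 ≤ q) (s t : ℝ) :
    |signedRpow q s - signedRpow q t| ≤ (q + 1) * max |s| |t| ^ q * |s - t| := by
  wlog hts : |t| ≤ |s| generalizing s t
  · rw [abs_sub_comm, max_comm, abs_sub_comm s]
    exact this t s (le_of_not_ge hts)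
  wlog hs : 0 ≤ s generalizing s t
  · have h := this (-s) (-t) (by simpa using hts) (by linarith)
    rwa [signedRpow_neg, signedRpow_neg, neg_sub_neg, abs_sub_comm, neg_sub_neg, abs_sub_comm t,
      abs_neg, abs_neg] at h
  rw [abs_of_nonneg hs] at hts ⊢
  rw [max_eq_left hts, abs_of_nonneg (sub_nonneg.2 ((le_abs_self t).trans hts))]
  have hφs : signedRpow q s = s ^ (q + 1) := signedRpow_of_nonneg hq hs
  have hmono : signedRpow q t ≤ signedRpow q s := calc
    signedRpow q t ≤ |signedRpow q t| := le_abs_self _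
    _ = |t| ^ (q + 1) := abs_signedRpow hq t
    _ ≤ signedRpow q s := by rw [hφs]; gcongr
  rw [abs_of_nonneg (sub_nonneg.2 hmono)]
  rcases le_or_gt 0 t with ht | ht
  · rw [hφs, signedRpow_of_nonneg hq ht]
    exact rpow_add_one_sub_rpow_add_one_le hq ht ((le_abs_self t).trans hts)
  · have hst : 0 ≤ s ^ q * (s - t) := by have := rpow_nonneg hs q; nlinarith
    have ht' : -t * |t| ^ q ≤ -t * s ^ q := by gcongr; linarith
    calc signedRpow q s - signedRpow q t = s * s ^ q + -t * |t| ^ q := by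
          simp only [signedRpow, abs_of_nonneg hs]; ring
      _ ≤ s ^ q * (s - t) := by linarith
      _ ≤ (q + 1) * s ^ q * (s - t) := by nlinarith

lemma abs_mul_signedRpow_add_sub_le (hq : 0 ≤ q) (x t : ℝ) :
    |x * (signedRpow q (t + x) - signedRpow q t)| ≤
      (q + 1) * 2 ^ q * (x ^ 2 * |t| ^ q + |x| ^ (q + 2)) := by
  have hmax : max |t + x| |t| ^ q ≤ 2 ^ q * (|t| ^ q + |x| ^ q) := calc
    max |t + x| |t| ^ q ≤ (|t| + |x|) ^ q := by
      gcongr; exact max_le (abs_add_le t x) (le_add_of_nonneg_right (abs_nonneg x))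
    _ ≤ 2 ^ q * (|t| ^ q + |x| ^ q) :=
      add_rpow_le_two_rpow_mul_add_rpow (abs_nonneg t) (abs_nonneg x) hq
  have hxx : x ^ 2 * |x| ^ q = |x| ^ (q + 2) := by
    rw [← mul_signedRpow_self hq, signedRpow]; ring
  calc |x * (signedRpow q (t + x) - signedRpow q t)|
      = |x| * |signedRpow q (t + x) - signedRpow q t| := abs_mul _ _
    _ ≤ |x| * ((q + 1) * max |t + x| |t| ^ q * |x|) := by
        gcongr; simpa using abs_signedRpow_sub_le hq (t + x) t
    _ = (q + 1) * max |t + x| |t| ^ q * x ^ 2 := by rw [← sq_abs x]; ring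
    _ ≤ (q + 1) * (2 ^ q * (|t| ^ q + |x| ^ q)) * x ^ 2 := by gcongr
    _ = (q + 1) * 2 ^ q * (x ^ 2 * |t| ^ q + |x| ^ (q + 2)) := by rw [← hxx]; ring

end signedRpow

namespace MeasureTheory

variable {Ω : Type*} [MeasurableSpace Ω] {μ : Measure Ω}

lemma lpNorm_rpow_eq_integral_abs_rpow {f : Ω → ℝ} {r : ℝ} (hr : 0 < r)
    (hf : AEStronglyMeasurable f μ) :
    lpNorm f (ENNReal.ofReal r) μ ^ r = ∫ ω, |f ω| ^ r ∂μ := by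
  rw [lpNorm_eq_integral_norm_rpow_toReal (by simpa using hr) ENNReal.ofReal_ne_top hf,
    ENNReal.toReal_ofReal hr.le, ← rpow_mul (integral_nonneg fun _ => by positivity),
    inv_mul_cancel₀ hr.ne', rpow_one]
  simp only [Real.norm_eq_abs]

lemma lpNorm_two_sq_eq_integral_sq {f : Ω → ℝ} (hf : AEStronglyMeasurable f μ) :
    lpNorm f 2 μ ^ 2 = ∫ ω, f ω ^ 2 ∂μ := by
  simpa only [ENNReal.ofReal_ofNat, rpow_two, sq_abs] using
    lpNorm_rpow_eq_integral_abs_rpow (r := 2) two_pos hf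

lemma lpNorm_le_lpNorm_of_exponent_le [IsProbabilityMeasure μ] {E : Type*} [NormedAddCommGroup E]
    {f : Ω → E} {p q : ENNReal} (hpq : p ≤ q) (hf : MemLp f q μ) :
    lpNorm f p μ ≤ lpNorm f q μ := by
  rw [← toReal_eLpNorm hf.1, ← toReal_eLpNorm hf.1]
  exact ENNReal.toReal_mono hf.eLpNorm_ne_top (eLpNorm_le_eLpNorm_of_exponent_le hpq hf.1)

lemma integral_abs_rpow_le_lpNorm_rpow [IsProbabilityMeasure μ] {f : Ω → ℝ} {p q : ℝ}
    (hq : 0 ≤ q) (hqp : q ≤ p) (hf : MemLp f (ENNReal.ofReal p) μ) :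
    ∫ ω, |f ω| ^ q ∂μ ≤ lpNorm f (ENNReal.ofReal p) μ ^ q := by
  obtain rfl | hq := hq.eq_or_lt
  · simp
  rw [← lpNorm_rpow_eq_integral_abs_rpow hq hf.1]
  exact rpow_le_rpow lpNorm_nonneg
    (lpNorm_le_lpNorm_of_exponent_le (ENNReal.ofReal_le_ofReal hqp) hf) hq.le

lemma integrable_abs_rpow_mul_abs_rpow [IsFiniteMeasure μ] {Y Z : Ω → ℝ} {p r s : ℝ} (hr : 0 ≤ r)
    (hs : 0 ≤ s) (hrs : r + s = p) (hY : MemLp Y (ENNReal.ofReal p) μ)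
    (hZ : MemLp Z (ENNReal.ofReal p) μ) :
    Integrable (fun ω => |Y ω| ^ r * |Z ω| ^ s) μ := by
  have hmeas : AEStronglyMeasurable (fun ω => |Y ω| ^ r * |Z ω| ^ s) μ :=
    ((continuous_abs.rpow_const fun _ => Or.inr hr).comp_aestronglyMeasurable hY.1).mul
      ((continuous_abs.rpow_const fun _ => Or.inr hs).comp_aestronglyMeasurable hZ.1)
  refine (hY.integrable_norm_rpow'.add hZ.integrable_norm_rpow').mono' hmeas
    (ae_of_all _ fun ω => ?_)
  subst hrs
  simp only [Real.norm_eq_abs, ENNReal.toReal_ofReal (add_nonneg hr hs), Pi.add_apply]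
  rw [abs_of_nonneg (by positivity)]
  exact rpow_mul_rpow_le_rpow_add_rpow (abs_nonneg _) (abs_nonneg _) hr hs

lemma integrable_mul_signedRpow [IsFiniteMeasure μ] {p : ℝ} (hp : 2 ≤ p) {Y Z : Ω → ℝ}
    (hY : MemLp Y (ENNReal.ofReal p) μ) (hZ : MemLp Z (ENNReal.ofReal p) μ) :
    Integrable (fun ω => Y ω * signedRpow (p - 2) (Z ω)) μ := by
  have hdom := integrable_abs_rpow_mul_abs_rpow zero_le_one (by linarith) (add_sub_cancel 1 p) hY hZ
  refine hdom.mono'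
    (hY.1.mul ((continuous_signedRpow (by linarith)).comp_aestronglyMeasurable hZ.1))
    (ae_of_all _ fun ω => ?_)
  rw [Real.norm_eq_abs, abs_mul, abs_signedRpow (by linarith), rpow_one,
    show p - 2 + 1 = p - 1 by ring]

end MeasureTheory

/-- `(p - 1) 2^(p-2)` comes from the mean value bound for `signedRpow (p - 2)`, the factor
`2^(p-2) + 1` from `E|Tᵢ|^(p-2) ≤ 2^(p-2) (‖S‖_p^(p-2) + ‖Xᵢ‖_p^(p-2))`. -/
def rosenthalConst (p : ℝ) : ℝ := (p - 1) * 2 ^ (p - 2) * (2 ^ (p - 2) + 1)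

lemma rosenthalConst_pos {p : ℝ} (hp : 1 < p) : 0 < rosenthalConst p := by
  unfold rosenthalConst
  have : 0 < p - 1 := by linarith
  positivity

section Rosenthal

variable {Ω : Type*} [MeasurableSpace Ω] {μ : Measure Ω} {p : ℝ}

lemma integral_mul_signedRpow_add_le [IsFiniteMeasure μ] (hp : 2 ≤ p) {X T : Ω → ℝ} (hXT : IndepFun X T μ)
    (hX : MemLp X (ENNReal.ofReal p) μ) (hT : MemLp T (ENNReal.ofReal p) μ) (hX0 : μ[X] = 0) :
    ∫ ω, X ω * signedRpow (p - 2) (T ω + X ω) ∂μ ≤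
      (p - 1) * 2 ^ (p - 2) *
        ((∫ ω, X ω ^ 2 ∂μ) * (∫ ω, |T ω| ^ (p - 2) ∂μ) + ∫ ω, |X ω| ^ p ∂μ) := by
  have hq : 0 ≤ p - 2 := by linarith
  have hφ := continuous_signedRpow hq
  have hφT := integrable_mul_signedRpow hp hX hT
  have hφS : Integrable (fun ω => X ω * signedRpow (p - 2) (T ω + X ω)) μ :=
    integrable_mul_signedRpow hp hX (hT.add hX)
  have hφT_zero : ∫ ω, X ω * signedRpow (p - 2) (T ω) ∂μ = 0 := by
    refine ((hXT.comp measurable_id hφ.measurable).integral_fun_mul_eq_mul_integral hX.1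
      (hφ.comp_aestronglyMeasurable hT.1)).trans ?_
    simp [hX0]
  have hX2T : Integrable (fun ω => X ω ^ 2 * |T ω| ^ (p - 2)) μ := by
    simpa [rpow_two, sq_abs] using
      integrable_abs_rpow_mul_abs_rpow zero_le_two hq (add_sub_cancel 2 p) hX hT
  have hX2T_eq : ∫ ω, X ω ^ 2 * |T ω| ^ (p - 2) ∂μ =
      (∫ ω, X ω ^ 2 ∂μ) * ∫ ω, |T ω| ^ (p - 2) ∂μ :=
    IndepFun.integral_fun_mul_eq_mul_integral
      (hXT.comp (measurable_id.pow_const 2) (measurable_abs.pow_const _)) (hX.1.pow 2)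
      ((continuous_abs.rpow_const fun _ => Or.inr hq).comp_aestronglyMeasurable hT.1)
  have hXp : Integrable (fun ω => |X ω| ^ p) μ := by
    simpa [ENNReal.toReal_ofReal (by linarith : 0 ≤ p)] using hX.integrable_norm_rpow'
  calc ∫ ω, X ω * signedRpow (p - 2) (T ω + X ω) ∂μ
      = ∫ ω, (X ω * signedRpow (p - 2) (T ω + X ω) - X ω * signedRpow (p - 2) (T ω)) ∂μ := by
        rw [integral_sub hφS hφT, hφT_zero, sub_zero]
    _ ≤ ∫ ω, (p - 1) * 2 ^ (p - 2) * (X ω ^ 2 * |T ω| ^ (p - 2) + |X ω| ^ p) ∂μ := by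
        refine integral_mono (hφS.sub hφT) ((hX2T.add hXp).const_mul _)
          fun ω => (le_abs_self _).trans ?_
        have h := abs_mul_signedRpow_add_sub_le hq (X ω) (T ω)
        rw [mul_sub] at h
        rwa [sub_add_cancel, show p - 2 + 1 = p - 1 by ring] at h
    _ = (p - 1) * 2 ^ (p - 2) *
          ((∫ ω, X ω ^ 2 ∂μ) * (∫ ω, |T ω| ^ (p - 2) ∂μ) + ∫ ω, |X ω| ^ p ∂μ) := by
        rw [integral_const_mul, integral_add hX2T hXp, hX2T_eq]

variable [IsProbabilityMeasure μ]

lemma integral_mul_signedRpow_add_le_lpNorm (hp : 2 ≤ p) {X T : Ω → ℝ}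
    (hXT : IndepFun X T μ) (hX : MemLp X (ENNReal.ofReal p) μ) (hT : MemLp T (ENNReal.ofReal p) μ)
    (hX0 : μ[X] = 0) :
    ∫ ω, X ω * signedRpow (p - 2) (T ω + X ω) ∂μ ≤
      rosenthalConst p * (lpNorm X 2 μ ^ 2 * lpNorm (T + X) (ENNReal.ofReal p) μ ^ (p - 2) +
        lpNorm X (ENNReal.ofReal p) μ ^ p) := by
  have hq : 0 ≤ p - 2 := by linarith
  have h1p : 1 ≤ ENNReal.ofReal p := by simpa using ENNReal.ofReal_le_ofReal (by linarith : 1 ≤ p)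
  have h2p : 2 ≤ ENNReal.ofReal p := by simpa using ENNReal.ofReal_le_ofReal hp
  set q := p - 2
  set σ := lpNorm X 2 μ
  set a := lpNorm X (ENNReal.ofReal p) μ
  set s := lpNorm (T + X) (ENNReal.ofReal p) μ
  have hσ : 0 ≤ σ := lpNorm_nonneg
  have ha : 0 ≤ a := lpNorm_nonneg
  have hs : 0 ≤ s := lpNorm_nonneg
  have hσa : σ ≤ a := lpNorm_le_lpNorm_of_exponent_le h2p hX
  have hT_moment : ∫ ω, |T ω| ^ q ∂μ ≤ 2 ^ q * (s ^ q + a ^ q) := calc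
    ∫ ω, |T ω| ^ q ∂μ ≤ lpNorm T (ENNReal.ofReal p) μ ^ q :=
      integral_abs_rpow_le_lpNorm_rpow hq (by linarith) hT
    _ ≤ (s + a) ^ q := by
      refine rpow_le_rpow lpNorm_nonneg ?_ hq
      simpa only [add_sub_cancel_right] using lpNorm_sub_le (hT.add hX) (g := X) h1p
    _ ≤ 2 ^ q * (s ^ q + a ^ q) := add_rpow_le_two_rpow_mul_add_rpow hs ha hq
  have hσ_a : σ ^ 2 * a ^ q ≤ a ^ p := calc
    σ ^ 2 * a ^ q ≤ a ^ (2 : ℝ) * a ^ q := by rw [rpow_two]; gcongr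
    _ = a ^ p := by rw [← rpow_add_of_nonneg ha zero_le_two hq, add_sub_cancel]
  have h := integral_mul_signedRpow_add_le hp hXT hX hT hX0
  rw [← lpNorm_two_sq_eq_integral_sq hX.1,
    ← lpNorm_rpow_eq_integral_abs_rpow (by linarith) hX.1] at h
  have hp1 : 0 ≤ p - 1 := by linarith
  calc ∫ ω, X ω * signedRpow q (T ω + X ω) ∂μ
      ≤ (p - 1) * 2 ^ q * (σ ^ 2 * (2 ^ q * (s ^ q + a ^ q)) + a ^ p) := by
        refine h.trans ?_
        gcongr
    _ = (p - 1) * 2 ^ q * (2 ^ q * (σ ^ 2 * s ^ q) + 2 ^ q * (σ ^ 2 * a ^ q) + a ^ p) := by ring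
    _ ≤ (p - 1) * 2 ^ q * ((2 ^ q + 1) * (σ ^ 2 * s ^ q) + 2 ^ q * a ^ p + a ^ p) := by
        gcongr
        linarith
    _ = rosenthalConst p * (σ ^ 2 * s ^ q + a ^ p) := by unfold rosenthalConst; ring

lemma lpNorm_sum_rpow_le {ι : Type*} [Fintype ι] (hp : 2 ≤ p) {X : ι → Ω → ℝ}
    (hXm : ∀ i, Measurable (X i)) (hindep : iIndepFun X μ)
    (hX : ∀ i, MemLp (X i) (ENNReal.ofReal p) μ) (hX0 : ∀ i, μ[X i] = 0) :
    lpNorm (∑ i, X i) (ENNReal.ofReal p) μ ^ p ≤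
      rosenthalConst p * ∑ i, lpNorm (X i) (ENNReal.ofReal p) μ ^ p +
        rosenthalConst p * (∑ i, lpNorm (X i) 2 μ ^ 2) *
          lpNorm (∑ i, X i) (ENNReal.ofReal p) μ ^ (p - 2) := by
  classical
  set S := ∑ i, X i with hS_def
  have hS : MemLp S (ENNReal.ofReal p) μ := memLp_finsetSum' _ fun i _ => hX i
  have hterm : ∀ i, ∫ ω, X i ω * signedRpow (p - 2) (S ω) ∂μ ≤
      rosenthalConst p * (lpNorm (X i) 2 μ ^ 2 * lpNorm S (ENNReal.ofReal p) μ ^ (p - 2) +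
        lpNorm (X i) (ENNReal.ofReal p) μ ^ p) := fun i => by
    have hindep_i : IndepFun (X i) (S - X i) μ := by
      rw [hS_def, ← Finset.sum_erase_eq_sub (Finset.mem_univ i)]
      exact (hindep.indepFun_finsetSum_of_notMem hXm (Finset.notMem_erase i _)).symm
    simpa only [Pi.sub_apply, sub_add_cancel] using
      integral_mul_signedRpow_add_le_lpNorm hp hindep_i (hX i) (hS.sub (hX i)) (hX0 i)
  calc lpNorm S (ENNReal.ofReal p) μ ^ p = ∫ ω, |S ω| ^ p ∂μ :=
        lpNorm_rpow_eq_integral_abs_rpow (by linarith) hS.1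
    _ = ∫ ω, ∑ i, X i ω * signedRpow (p - 2) (S ω) ∂μ := by
        congr 1 with ω
        rw [← Finset.sum_mul, ← Finset.sum_apply, ← hS_def, mul_signedRpow_self (by linarith),
          sub_add_cancel]
    _ = ∑ i, ∫ ω, X i ω * signedRpow (p - 2) (S ω) ∂μ :=
        integral_finsetSum _ fun i _ => integrable_mul_signedRpow hp (hX i) hS
    _ ≤ ∑ i, rosenthalConst p * (lpNorm (X i) 2 μ ^ 2 * lpNorm S (ENNReal.ofReal p) μ ^ (p - 2) +
          lpNorm (X i) (ENNReal.ofReal p) μ ^ p) := Finset.sum_le_sum fun i _ => hterm i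
    _ = _ := by
        simp only [mul_add, Finset.sum_add_distrib, ← Finset.mul_sum, ← Finset.sum_mul]
        ring

theorem lpNorm_sum_le_of_iIndepFun {ι : Type*} [Fintype ι] (hp : 2 ≤ p) {X : ι → Ω → ℝ}
    (hXm : ∀ i, Measurable (X i)) (hindep : iIndepFun X μ)
    (hX : ∀ i, MemLp (X i) (ENNReal.ofReal p) μ) (hX0 : ∀ i, μ[X i] = 0) :
    lpNorm (∑ i, X i) (ENNReal.ofReal p) μ ≤
      (2 * (rosenthalConst p * ∑ i, lpNorm (X i) (ENNReal.ofReal p) μ ^ p)) ^ (1 / p) +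
        √(2 * (rosenthalConst p * ∑ i, lpNorm (X i) 2 μ ^ 2)) :=
  le_rpow_add_sqrt_of_rpow_le_add_mul_rpow (by linarith) lpNorm_nonneg
    (mul_nonneg (rosenthalConst_pos (by linarith)).le
      (Finset.sum_nonneg fun _ _ => rpow_nonneg lpNorm_nonneg _))
    (lpNorm_sum_rpow_le hp hXm hindep hX hX0)

theorem lpNorm_sum_le_of_iIndepFun_of_identDistrib {Ω' : Type*} [MeasurableSpace Ω']
    {ν : Measure Ω'} {ι : Type*} [Fintype ι] (hp : 2 ≤ p) {X : ι → Ω → ℝ} {Y : Ω' → ℝ}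
    (hXm : ∀ i, Measurable (X i)) (hindep : iIndepFun X μ) (hid : ∀ i, IdentDistrib (X i) Y μ ν)
    (hY : MemLp Y (ENNReal.ofReal p) ν) (hY0 : ν[Y] = 0) :
    lpNorm (∑ i, X i) (ENNReal.ofReal p) μ ≤
      (2 * rosenthalConst p) ^ (1 / p) *
          ((Fintype.card ι : ℝ) ^ (1 / p) * lpNorm Y (ENNReal.ofReal p) ν) +
        √(2 * rosenthalConst p) * (√(Fintype.card ι) * lpNorm Y 2 ν) := by
  have hlpNorm r i : lpNorm (X i) r μ = lpNorm Y r ν := by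
    rw [← toReal_eLpNorm (hid i).aemeasurable_fst.aestronglyMeasurable,
      ← toReal_eLpNorm (hid i).aemeasurable_snd.aestronglyMeasurable, (hid i).eLpNorm_eq]
  have h := lpNorm_sum_le_of_iIndepFun hp hXm hindep (fun i => (hid i).symm.memLp_snd hY)
    fun i => (hid i).integral_eq.trans hY0
  simp only [hlpNorm, Finset.sum_const, Finset.card_univ, nsmul_eq_mul] at h
  have h2C : 0 ≤ 2 * rosenthalConst p := by linarith [rosenthalConst_pos (by linarith : 1 < p)]
  have hN : (0 : ℝ) ≤ Fintype.card ι := Nat.cast_nonneg _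
  have hpth_root :
      (2 * (rosenthalConst p * (Fintype.card ι * lpNorm Y (ENNReal.ofReal p) ν ^ p))) ^ (1 / p) =
        (2 * rosenthalConst p) ^ (1 / p) *
          ((Fintype.card ι : ℝ) ^ (1 / p) * lpNorm Y (ENNReal.ofReal p) ν) := by
    rw [← mul_assoc, mul_rpow h2C (mul_nonneg hN (rpow_nonneg lpNorm_nonneg p)),
      mul_rpow hN (rpow_nonneg lpNorm_nonneg p), one_div, rpow_rpow_inv lpNorm_nonneg (by linarith)]
  have hsqrt : √(2 * (rosenthalConst p * (Fintype.card ι * lpNorm Y 2 ν ^ 2))) =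
      √(2 * rosenthalConst p) * (√(Fintype.card ι) * lpNorm Y 2 ν) := by
    rw [← mul_assoc, sqrt_mul h2C, sqrt_mul hN, sqrt_sq lpNorm_nonneg]
  rwa [hpth_root, hsqrt] at h

end Rosenthal

/-- Rosenthal's inequality for centered i.i.d. real random variables in `L^p`, `p ≥ 2`. -/
theorem rosenthal_iid (p : ℝ) (hp : 2 ≤ p) :
    ∃ c > (0 : ℝ), ∀ {Ω : Type} [MeasurableSpace Ω] (μ : Measure Ω),
      IsProbabilityMeasure μ →
      ∀ (n : ℕ) (hn : 0 < n) (X : Fin n → Ω → ℝ),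
      (∀ i, Measurable (X i)) →
      iIndepFun X μ →
      (∀ i, IdentDistrib (X i) (X ⟨0, hn⟩) μ μ) →
      MemLp (X ⟨0, hn⟩) (ENNReal.ofReal p) μ →
      (∫ ω, X ⟨0, hn⟩ ω ∂μ) = 0 →
      eLpNorm (fun ω => ∑ i, X i ω) (ENNReal.ofReal p) μ ≤
        ENNReal.ofReal (c * (Real.sqrt n * (eLpNorm (X ⟨0, hn⟩) 2 μ).toReal +
          (n : ℝ) ^ (1 / p) * (eLpNorm (X ⟨0, hn⟩) (ENNReal.ofReal p) μ).toReal)) := by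
  have hC := rosenthalConst_pos (by linarith : 1 < p)
  refine ⟨(2 * rosenthalConst p) ^ (1 / p) + √(2 * rosenthalConst p), by positivity, ?_⟩
  intro Ω _ μ _ n hn X hXm hindep hid hX₀ hX₀_centered
  have hS : MemLp (∑ i, X i) (ENNReal.ofReal p) μ :=
    memLp_finsetSum' _ fun i _ => (hid i).symm.memLp_snd hX₀
  have h := lpNorm_sum_le_of_iIndepFun_of_identDistrib hp hXm hindep hid hX₀ hX₀_centered
  rw [Fintype.card_fin] at h
  rw [← Finset.sum_fn, ← ofReal_lpNorm hS, toReal_eLpNorm hX₀.1, toReal_eLpNorm hX₀.1]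
  refine ENNReal.ofReal_le_ofReal (h.trans ?_)
  have hα : 0 ≤ (2 * rosenthalConst p) ^ (1 / p) := by positivity
  have hβ : 0 ≤ √(2 * rosenthalConst p) := sqrt_nonneg _
  have hu : 0 ≤ (n : ℝ) ^ (1 / p) * lpNorm (X ⟨0, hn⟩) (ENNReal.ofReal p) μ :=
    mul_nonneg (by positivity) lpNorm_nonneg
  have hv : 0 ≤ √n * lpNorm (X ⟨0, hn⟩) 2 μ := mul_nonneg (sqrt_nonneg _) lpNorm_nonneg
  nlinarith [mul_nonneg hα hv, mul_nonneg hβ hu]
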